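/- Let μ be the uniform distribution on the unit circle S₁ ⊆ ℝ² and ν = (ν_{1/2} + ν_{3/2})/2 where ν_r is uniform on the circle of radius r. Then there is exactly one martingale coupling of (μ, ν), namely π(dx,dy) = π_x(dy) μ(dx) with π_x = (δ_{x/2} + δ_{3x/2})/2. -/

import Mathlib

/-!
For a martingale kernel `κ`, Jensen gives `‖x‖ ≤ ∫ ‖y‖ dκₓ`. Integrated against `μ` both sides
equal 1, the mean radius of `ν` being `(1/2 + 3/2)/2`, so equality holds `μ`-a.e. Equality in
`‖∫ y dκₓ‖ ≤ ∫ ‖y‖ dκₓ` in an inner product space puts `κₓ` on the ray `ℝ₊x`; since `ν` lives on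
the circles of radii `1/2` and `3/2`, `κₓ` is carried by `{x/2, 3x/2}`, and the barycenter
condition forces both weights to be `1/2`.
-/

open MeasureTheory Set
open scoped ENNReal

noncomputable section

/-- The uniform distribution on the circle of radius `r` in `ℝ²`. -/
def circleUniform (r : ℝ) : Measure (EuclideanSpace ℝ (Fin 2)) :=
  Measure.map (fun θ : ℝ => (WithLp.toLp 2 (r • ![Real.cos θ, Real.sin θ]) : EuclideanSpace ℝ (Fin 2)))
    ((ENNReal.ofReal (2 * Real.pi))⁻¹ • volume.restrict (Set.Ico 0 (2 * Real.pi)))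

/-- `κf` is the kernel of a martingale coupling from `p` to `q` on `ℝ²`. -/
def MTker2 (p q : Measure (EuclideanSpace ℝ (Fin 2)))
    (κf : EuclideanSpace ℝ (Fin 2) → Measure (EuclideanSpace ℝ (Fin 2))) : Prop :=
  (∀ x, IsProbabilityMeasure (κf x)) ∧ Measurable κf ∧ p.bind κf = q ∧
    ∀ᵐ x ∂p, Integrable (fun y => y) (κf x) ∧ (∫ y, y ∂(κf x)) = x

/-- The canonical kernel `x ↦ (δ_{x/2} + δ_{3x/2})/2`. -/
def canonKer (x : EuclideanSpace ℝ (Fin 2)) : Measure (EuclideanSpace ℝ (Fin 2)) :=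
  (2 : ℝ≥0∞)⁻¹ • (Measure.dirac ((2⁻¹ : ℝ) • x) + Measure.dirac (((3 : ℝ)/2) • x))

namespace MeasureTheory.Measure

theorem eq_smul_dirac_add_smul_dirac {α : Type*} [MeasurableSpace α] [MeasurableSingletonClass α]
    {m : Measure α} {a b : α} (hab : a ≠ b) (h : ∀ᵐ y ∂m, y = a ∨ y = b) :
    m = m {a} • dirac a + m {b} • dirac b := by
  have hm : m.restrict ({a} ∪ {b}) = m := Measure.restrict_eq_self_of_ae_mem h
  rw [← restrict_singleton, ← restrict_singleton,
    ← restrict_union (disjoint_singleton.mpr hab) (measurableSet_singleton b), hm]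

section TwoPoint

variable {α E : Type*} [MeasurableSpace α] [MeasurableSingletonClass α] [NormedAddCommGroup E]
  {s t : ℝ≥0∞} {a b : α} {f : α → E}

theorem integrable_smul_dirac_add_smul_dirac (hs : s ≠ ∞) (ht : t ≠ ∞) :
    Integrable f (s • dirac a + t • dirac b) :=
  ((integrable_dirac enorm_lt_top).smul_measure hs).add_measure
    ((integrable_dirac enorm_lt_top).smul_measure ht)

theorem integral_smul_dirac_add_smul_dirac [NormedSpace ℝ E] [CompleteSpace E] (hs : s ≠ ∞)
    (ht : t ≠ ∞) :
    ∫ y, f y ∂(s • dirac a + t • dirac b) = s.toReal • f a + t.toReal • f b := by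
  rw [integral_add_measure ((integrable_dirac enorm_lt_top).smul_measure hs)
      ((integrable_dirac enorm_lt_top).smul_measure ht),
    integral_smul_measure, integral_smul_measure, integral_dirac, integral_dirac]

end TwoPoint

end MeasureTheory.Measure

section Jensen

variable {E : Type*} [NormedAddCommGroup E] [NormedSpace ℝ E] [MeasurableSpace E]
  [OpensMeasurableSpace E]

theorem ae_lintegral_enorm_eq_of_lintegral_enorm_bind_eq {p : Measure E} {κ : E → Measure E}
    (hκ : Measurable κ) (hbar : ∀ᵐ x ∂p, ∫ y, y ∂κ x = x)
    (hnorm : ∫⁻ y, ‖y‖ₑ ∂(p.bind κ) = ∫⁻ x, ‖x‖ₑ ∂p) (hfin : ∫⁻ x, ‖x‖ₑ ∂p ≠ ∞) :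
    ∀ᵐ x ∂p, ∫⁻ y, ‖y‖ₑ ∂κ x = ‖x‖ₑ := by
  have hjensen : ∀ᵐ x ∂p, ‖x‖ₑ ≤ ∫⁻ y, ‖y‖ₑ ∂κ x := by
    filter_upwards [hbar] with x hx
    simpa only [hx] using enorm_integral_le_lintegral_enorm (μ := κ x) (fun y => y)
  have hmeas : Measurable fun x => ∫⁻ y, ‖y‖ₑ ∂κ x :=
    (Measure.measurable_lintegral measurable_enorm).comp hκ
  have hmean : ∫⁻ x, ∫⁻ y, ‖y‖ₑ ∂κ x ∂p = ∫⁻ x, ‖x‖ₑ ∂p := by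
    rw [← Measure.lintegral_bind hκ.aemeasurable measurable_enorm.aemeasurable, hnorm]
  filter_upwards [ae_eq_of_ae_le_of_lintegral_le hjensen hfin hmeas.aemeasurable hmean.le]
    with x hx using hx.symm

end Jensen

open scoped RealInnerProductSpace in
theorem ae_sameRay_of_integral_eq {E : Type*} [NormedAddCommGroup E] [InnerProductSpace ℝ E]
    [CompleteSpace E] [MeasurableSpace E] {κ : Measure E} {x : E}
    (hint : Integrable (fun y => y) κ) (hbar : ∫ y, y ∂κ = x) (hnorm : ∫⁻ y, ‖y‖ₑ ∂κ = ‖x‖ₑ) :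
    ∀ᵐ y ∂κ, SameRay ℝ x y := by
  have hint_norm : ∫ y, ‖y‖ ∂κ = ‖x‖ := by
    rw [← ENNReal.ofReal_eq_ofReal_iff (integral_nonneg fun _ => norm_nonneg _) (norm_nonneg x),
      ofReal_integral_norm_eq_lintegral_enorm hint, hnorm, ofReal_norm]
  have hgap_int : Integrable (fun y => ‖x‖ * ‖y‖ - ⟪x, y⟫) κ :=
    (hint.norm.const_mul _).sub (hint.const_inner x)
  have hgap_zero : ∫ y, (‖x‖ * ‖y‖ - ⟪x, y⟫) ∂κ = 0 := by
    rw [integral_sub (hint.norm.const_mul _) (hint.const_inner x), integral_const_mul,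
      integral_inner hint, hint_norm, hbar, real_inner_self_eq_norm_mul_norm, sub_self]
  have hgap_nonneg : 0 ≤ᵐ[κ] fun y => ‖x‖ * ‖y‖ - ⟪x, y⟫ :=
    Filter.Eventually.of_forall fun y => sub_nonneg.mpr (real_inner_le_norm x y)
  filter_upwards [(integral_eq_zero_iff_of_nonneg_ae hgap_nonneg hgap_int).mp hgap_zero] with y hy
  exact sameRay_iff_norm_smul_eq.mpr (inner_eq_norm_mul_iff_real.mp (sub_eq_zero.mp hy).symm).symm

section TwoCircles

local notation "ℝ²" => EuclideanSpace ℝ (Fin 2)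

def circlePoint (r θ : ℝ) : ℝ² := WithLp.toLp 2 (r • ![Real.cos θ, Real.sin θ])

def angleUniform : Measure ℝ :=
  (ENNReal.ofReal (2 * Real.pi))⁻¹ • volume.restrict (Ico 0 (2 * Real.pi))

theorem circleUniform_eq_map (r : ℝ) : circleUniform r = angleUniform.map (circlePoint r) := rfl

instance : IsProbabilityMeasure angleUniform := by
  constructor
  rw [angleUniform, Measure.smul_apply, Measure.restrict_apply_univ, Real.volume_Ico, sub_zero,
    smul_eq_mul, ENNReal.inv_mul_cancel (by positivity) ENNReal.ofReal_ne_top]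

theorem circlePoint_eq_smul (r θ : ℝ) : circlePoint r θ = r • circlePoint 1 θ := by
  simp only [circlePoint, ← WithLp.toLp_smul, smul_smul, mul_one]

theorem continuous_circlePoint (r : ℝ) : Continuous (circlePoint r) := by
  unfold circlePoint
  fun_prop

theorem norm_circlePoint (r θ : ℝ) : ‖circlePoint r θ‖ = |r| := by
  rw [circlePoint_eq_smul, norm_smul, EuclideanSpace.norm_eq, Fin.sum_univ_two]
  simp [circlePoint]

instance (r : ℝ) : IsProbabilityMeasure (circleUniform r) := by
  rw [circleUniform_eq_map]
  exact Measure.isProbabilityMeasure_map (continuous_circlePoint r).aemeasurable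

theorem map_smul_circleUniform_one (c : ℝ) :
    (circleUniform 1).map (fun x : ℝ² => c • x) = circleUniform c := by
  rw [circleUniform_eq_map, circleUniform_eq_map,
    Measure.map_map (measurable_const_smul c) (continuous_circlePoint 1).measurable]
  congr 1
  funext θ
  simp [← circlePoint_eq_smul]

theorem ae_norm_circleUniform (r : ℝ) : ∀ᵐ y ∂circleUniform r, ‖y‖ = |r| := by
  rw [circleUniform_eq_map, ae_map_iff (continuous_circlePoint r).aemeasurable
    (measurableSet_eq_fun measurable_norm measurable_const)]
  exact Filter.Eventually.of_forall (norm_circlePoint r)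

theorem lintegral_enorm_circleUniform (r : ℝ) :
    ∫⁻ y, ‖y‖ₑ ∂circleUniform r = ENNReal.ofReal |r| := by
  rw [lintegral_congr_ae ((ae_norm_circleUniform r).mono fun y hy => by
    rw [← ofReal_norm, hy]), lintegral_const, measure_univ, mul_one]

theorem ae_norm_circleUniform_half_add_three_halves :
    ∀ᵐ y ∂((2 : ℝ≥0∞)⁻¹ • (circleUniform (1/2) + circleUniform (3/2))),
      ‖y‖ = 1/2 ∨ ‖y‖ = 3/2 := by
  refine Measure.ae_smul_measure (ae_add_measure_iff.mpr ⟨?_, ?_⟩) _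
  · filter_upwards [ae_norm_circleUniform (1/2)] with y hy
    exact Or.inl (by rw [hy]; norm_num)
  · filter_upwards [ae_norm_circleUniform (3/2)] with y hy
    exact Or.inr (by rw [hy]; norm_num)

theorem lintegral_enorm_circleUniform_half_add_three_halves :
    ∫⁻ y, ‖y‖ₑ ∂((2 : ℝ≥0∞)⁻¹ • (circleUniform (1/2) + circleUniform (3/2))) = 1 := by
  rw [lintegral_smul_measure, lintegral_add_measure, lintegral_enorm_circleUniform,
    lintegral_enorm_circleUniform, ← ENNReal.ofReal_add (by positivity) (by positivity)]
  norm_num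
  exact ENNReal.inv_mul_cancel two_ne_zero ENNReal.ofNat_ne_top

theorem canonKer_eq (x : ℝ²) :
    canonKer x = (2 : ℝ≥0∞)⁻¹ • Measure.dirac ((2⁻¹ : ℝ) • x)
      + (2 : ℝ≥0∞)⁻¹ • Measure.dirac (((3 : ℝ)/2) • x) :=
  smul_add _ _ _

instance (x : ℝ²) : IsProbabilityMeasure (canonKer x) := by
  constructor
  simp only [canonKer_eq, Measure.add_apply, Measure.smul_apply, measure_univ, smul_eq_mul,
    mul_one, ENNReal.inv_two_add_inv_two]

theorem measurable_dirac_smul_apply (c : ℝ) {s : Set ℝ²} (hs : MeasurableSet s) :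
    Measurable fun x : ℝ² => Measure.dirac (c • x) s :=
  (Measure.measurable_coe hs).comp (Measure.measurable_dirac.comp (measurable_const_smul c))

theorem measurable_canonKer : Measurable canonKer := by
  refine Measure.measurable_of_measurable_coe _ fun s hs => ?_
  simp only [canonKer_eq, Measure.add_apply, Measure.smul_apply, smul_eq_mul]
  exact ((measurable_dirac_smul_apply _ hs).const_mul _).add
    ((measurable_dirac_smul_apply _ hs).const_mul _)

theorem integral_id_canonKer (x : ℝ²) : ∫ y, y ∂canonKer x = x := by
  rw [canonKer_eq, Measure.integral_smul_dirac_add_smul_dirac (by simp) (by simp), smul_smul,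
    smul_smul, ← add_smul]
  norm_num

theorem bind_canonKer :
    (circleUniform 1).bind canonKer
      = (2 : ℝ≥0∞)⁻¹ • (circleUniform (1/2) + circleUniform (3/2)) := by
  ext s hs
  have hdirac (c : ℝ) : ∫⁻ x, Measure.dirac (c • x) s ∂circleUniform 1 = circleUniform c s := by
    rw [← map_smul_circleUniform_one c, ← Measure.bind_dirac_eq_map _ (measurable_const_smul c)]
    exact (Measure.bind_apply hs
      (Measure.measurable_dirac.comp (measurable_const_smul c)).aemeasurable).symm
  simp only [Measure.bind_apply hs measurable_canonKer.aemeasurable, canonKer, Measure.smul_apply,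
    Measure.add_apply, smul_eq_mul]
  rw [lintegral_const_mul' _ _ (by simp), lintegral_add_left (measurable_dirac_smul_apply _ hs),
    hdirac, hdirac]
  norm_num

theorem eq_canonKer_of_ae_mem {κ : Measure ℝ²} [IsProbabilityMeasure κ] {x : ℝ²} (hx : x ≠ 0)
    (hsupp : ∀ᵐ y ∂κ, y = (2⁻¹ : ℝ) • x ∨ y = ((3 : ℝ)/2) • x) (hbar : ∫ y, y ∂κ = x) :
    κ = canonKer x := by
  have hinj := smul_left_injective ℝ hx
  have hdecomp := Measure.eq_smul_dirac_add_smul_dirac (hinj.ne (by norm_num)) hsupp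
  set α := κ {(2⁻¹ : ℝ) • x}
  set β := κ {((3 : ℝ)/2) • x}
  have hmass : α.toReal + β.toReal = 1 := by
    have hsum : α + β = 1 := by simpa using (congrArg (· univ) hdecomp).symm
    rw [← ENNReal.toReal_add (measure_ne_top _ _) (measure_ne_top _ _), hsum, ENNReal.toReal_one]
  have hmean : α.toReal * 2⁻¹ + β.toReal * (3/2) = 1 := by
    rw [hdecomp, Measure.integral_smul_dirac_add_smul_dirac (measure_ne_top _ _)
      (measure_ne_top _ _), smul_smul, smul_smul, ← add_smul] at hbar
    exact hinj (hbar.trans (one_smul ℝ x).symm)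
  have hα : α = 2⁻¹ :=
    (ENNReal.toReal_eq_toReal_iff' (x := α) (measure_ne_top _ _) (by simp)).mp
      (by rw [ENNReal.toReal_inv, ENNReal.toReal_ofNat]; linarith)
  have hβ : β = 2⁻¹ :=
    (ENNReal.toReal_eq_toReal_iff' (x := β) (measure_ne_top _ _) (by simp)).mp
      (by rw [ENNReal.toReal_inv, ENNReal.toReal_ofNat]; linarith)
  rw [hdecomp, hα, hβ, canonKer_eq]

theorem mtker2_canonKer :
    MTker2 (circleUniform 1) ((2 : ℝ≥0∞)⁻¹ • (circleUniform (1/2) + circleUniform (3/2)))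
      canonKer := by
  refine ⟨inferInstance, measurable_canonKer, bind_canonKer, ae_of_all _ fun x => ⟨?_, ?_⟩⟩
  · rw [canonKer_eq]
    exact Measure.integrable_smul_dirac_add_smul_dirac (by simp) (by simp)
  · exact integral_id_canonKer x

theorem ae_eq_canonKer_of_mtker2 {κ : ℝ² → Measure ℝ²}
    (hκ : MTker2 (circleUniform 1)
      ((2 : ℝ≥0∞)⁻¹ • (circleUniform (1/2) + circleUniform (3/2))) κ) :
    ∀ᵐ x ∂circleUniform 1, κ x = canonKer x := by
  obtain ⟨hprob, hmeas, hbind, hmart⟩ := hκ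
  have hjensen := ae_lintegral_enorm_eq_of_lintegral_enorm_bind_eq hmeas
    (hmart.mono fun _ h => h.2)
    (by rw [hbind, lintegral_enorm_circleUniform_half_add_three_halves,
      lintegral_enorm_circleUniform]; simp)
    (by simp [lintegral_enorm_circleUniform])
  have hsupp := Measure.ae_ae_of_ae_bind hmeas.aemeasurable
    (hbind ▸ ae_norm_circleUniform_half_add_three_halves)
  filter_upwards [hjensen, hsupp, hmart, ae_norm_circleUniform 1]
    with x hx_norm_mean hx_supp ⟨hx_int, hx_bar⟩ hx_norm
  rw [abs_one] at hx_norm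
  have hx : x ≠ 0 := norm_ne_zero_iff.mp (by rw [hx_norm]; exact one_ne_zero)
  have := hprob x
  refine eq_canonKer_of_ae_mem hx ?_ hx_bar
  filter_upwards [ae_sameRay_of_integral_eq hx_int hx_bar hx_norm_mean, hx_supp]
    with y hy_ray hy_norm
  have hy_ray : y = ‖y‖ • x := by simpa [hx_norm] using hy_ray.norm_smul_eq
  rcases hy_norm with h | h
  · left; rw [hy_ray, h]; norm_num
  · right; rw [hy_ray, h]

end TwoCircles

/-- For `μ` uniform on the unit circle and `ν = (ν_{1/2} + ν_{3/2})/2`, there is exactly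
one martingale coupling of `(μ, ν)`, namely the one with conditional laws
`π_x = (δ_{x/2} + δ_{3x/2})/2`. -/
theorem unique_martingale_transport_circles :
    MTker2 (circleUniform 1)
      ((2 : ℝ≥0∞)⁻¹ • (circleUniform (1/2) + circleUniform (3/2))) canonKer ∧
    ∀ κf, MTker2 (circleUniform 1)
        ((2 : ℝ≥0∞)⁻¹ • (circleUniform (1/2) + circleUniform (3/2))) κf →
      ∀ᵐ x ∂(circleUniform 1), κf x = canonKer x :=
  ⟨mtker2_canonKer, fun _ hκ => ae_eq_canonKer_of_mtker2 hκ⟩
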